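/- For 1 ≤ p < 2 and any tensor product f = f₁⊗φ with f₁ ∈ M^p(ℝ) nonzero, the orbit {π(0,0,0,u,0)f : u ∈ ℝ} of the G_{5,3}-representation is unbounded in M^p(ℝ²): ‖π(0,0,0,u,0)(f₁⊗φ)‖_{M^p(ℝ²)} = c_p(4+u²)^{1/(2p)-1/4}‖f₁‖_{M^p}, which tends to infinity as |u| → ∞. -/

import Mathlib

/-!
`π(0,0,0,u,0)(f₁ ⊗ φ)` is the tensor product of the modulation `M_u f₁` and the chirped Gaussian
`e^{iπut²} φ`, so its short-time Fourier transform factors. The first factor is `V_φ f₁` shifted in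
frequency by `u`, which does not change its `L^p` norm. The second is a Gaussian integral with
`|V_φ(e^{iπut²}φ)(x, ξ)| = (4 + u²)^{-1/4} exp(-πx²/2 - 2π(ξ - ux/2)²/(4 + u²))`; after the shear
`ξ ↦ ξ - ux/2` its `p`-th power integrates to `(4 + u²)^{1/2 - p/4} / p`. Taking `p`-th roots leaves
the factor `(4 + u²)^{1/(2p) - 1/4}`, whose exponent is positive exactly when `p < 2`.
-/

open MeasureTheory Filter

/-- The Gaussian `φ(t) = e^{-π t²}`. -/
noncomputable def gauss1 (t : ℝ) : ℂ := Complex.exp ((-(Real.pi * t ^ 2) : ℝ) : ℂ)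

/-- The representation `π = π₁` of `G_{5,3}` on `L²(ℝ²)`. -/
noncomputable def g53rep (x : ℝ × ℝ × ℝ × ℝ × ℝ) (g : ℝ × ℝ → ℂ) :
    ℝ × ℝ → ℂ := fun p =>
  Complex.exp ((2 * Real.pi *
      (x.1 - x.2.2.1 * x.2.2.2.1 + x.2.2.2.1 * p.1 - x.2.1 * p.2
        + (1 / 2) * x.2.2.2.1 * p.2 ^ 2) : ℝ) * Complex.I) *
    g (p.1 - x.2.2.1, p.2 - x.2.2.2.2)

/-- The short-time Fourier transform on `ℝ` with Gaussian window. -/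
noncomputable def stftGauss (f : ℝ → ℂ) (x ξ : ℝ) : ℂ :=
  ∫ t : ℝ, f t * (starRingEnd ℂ) (gauss1 (t - x)) *
    Complex.exp (-(2 * Real.pi * t * ξ : ℝ) * Complex.I)

/-- The short-time Fourier transform on `ℝ²` with window `φ⊗φ`. -/
noncomputable def stftGauss2 (F : ℝ × ℝ → ℂ) (x₁ x₂ ξ₁ ξ₂ : ℝ) : ℂ :=
  ∫ q : ℝ × ℝ, F q * (starRingEnd ℂ) (gauss1 (q.1 - x₁) * gauss1 (q.2 - x₂)) *
    Complex.exp (-(2 * Real.pi * (q.1 * ξ₁ + q.2 * ξ₂) : ℝ) * Complex.I)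

def MeasurableEquiv.prodProdProdComm (α β γ δ : Type*) [MeasurableSpace α]
    [MeasurableSpace β] [MeasurableSpace γ] [MeasurableSpace δ] :
    (α × β) × γ × δ ≃ᵐ (α × γ) × β × δ where
  toEquiv := .prodProdProdComm α β γ δ
  measurable_toFun := by dsimp [Equiv.prodProdProdComm]; fun_prop
  measurable_invFun := by dsimp [Equiv.prodProdProdComm]; fun_prop

namespace MeasureTheory

variable {α β γ δ : Type*} [MeasurableSpace α] [MeasurableSpace β] [MeasurableSpace γ]
  [MeasurableSpace δ]

theorem measurePreserving_prodProdProdComm (μa : Measure α) (μb : Measure β) (μc : Measure γ)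
    (μd : Measure δ) [SFinite μa] [SFinite μb] [SFinite μc] [SFinite μd] :
    MeasurePreserving (MeasurableEquiv.prodProdProdComm α β γ δ)
      ((μa.prod μb).prod (μc.prod μd)) ((μa.prod μc).prod (μb.prod μd)) :=
  ((((measurePreserving_prodAssoc μa μc (μb.prod μd)).symm _).comp
    ((MeasurePreserving.id μa).prod (measurePreserving_prodAssoc μc μb μd))).comp
    (((MeasurePreserving.id μa).prod
      ((Measure.measurePreserving_swap (μ := μb) (ν := μc)).prod (MeasurePreserving.id μd))).comp
    (((MeasurePreserving.id μa).prod ((measurePreserving_prodAssoc μb μc μd).symm _)).comp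
      (measurePreserving_prodAssoc μa μb (μc.prod μd)))) : _)

theorem integral_prodProdProdComm_mul {𝕜 : Type*} [RCLike 𝕜] (μa : Measure α) (μb : Measure β)
    (μc : Measure γ) (μd : Measure δ) [SFinite μa] [SFinite μb] [SFinite μc] [SFinite μd]
    (F : α × γ → 𝕜) (G : β × δ → 𝕜) :
    ∫ w, F (w.1.1, w.2.1) * G (w.1.2, w.2.2) ∂((μa.prod μb).prod (μc.prod μd))
      = (∫ z, F z ∂(μa.prod μc)) * ∫ z, G z ∂(μb.prod μd) := by
  rw [← integral_prod_mul F G]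
  exact (measurePreserving_prodProdProdComm μa μb μc μd).integral_comp' (fun z => F z.1 * G z.2)

theorem integral_prod_comp_skew_sub {E G : Type*} [NormedAddCommGroup E] [NormedSpace ℝ E]
    [MeasurableSpace G] [AddGroup G] [MeasurableAdd₂ G] [MeasurableSub₂ G]
    (μ : Measure α) (ν : Measure G) [SFinite μ] [SFinite ν] [ν.IsAddRightInvariant]
    {h : α → G} (hh : Measurable h) (F : α × G → E) :
    ∫ z, F (z.1, z.2 - h z.1) ∂(μ.prod ν) = ∫ z, F z ∂(μ.prod ν) := by
  let e : α × G ≃ᵐ α × G :=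
    { toFun := fun z => (z.1, z.2 - h z.1)
      invFun := fun z => (z.1, z.2 + h z.1)
      left_inv := fun z => by simp
      right_inv := fun z => by simp
      measurable_toFun := by
        show Measurable fun z : α × G => (z.1, z.2 - h z.1)
        fun_prop
      measurable_invFun := by
        show Measurable fun z : α × G => (z.1, z.2 + h z.1)
        fun_prop }
  have he : MeasurePreserving e (μ.prod ν) (μ.prod ν) :=
    (MeasurePreserving.id μ).skew_product (g := fun x y => y - h x) (by fun_prop)
      (ae_of_all _ fun x => map_sub_right_eq_self ν (h x))
  exact he.integral_comp' F

end MeasureTheory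

section

open Complex

theorem norm_integral_cexp_quadratic {b : ℂ} (hb : b.re < 0) (c d : ℂ) :
    ‖∫ x : ℝ, cexp (b * x ^ 2 + c * x + d)‖
      = (Real.pi / ‖b‖) ^ (1 / 2 : ℝ) * Real.exp (d - c ^ 2 / (4 * b)).re := by
  rw [integral_cexp_quadratic hb, norm_mul, norm_exp,
    show (1 / 2 : ℂ) = ((1 / 2 : ℝ) : ℂ) by norm_num, norm_cpow_real, norm_div, norm_neg,
    norm_real, Real.norm_of_nonneg Real.pi_pos.le]

noncomputable def modulation (u : ℝ) (f : ℝ → ℂ) (t : ℝ) : ℂ :=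
  Complex.exp ((2 * Real.pi * u * t : ℝ) * Complex.I) * f t

noncomputable def chirp (u : ℝ) (f : ℝ → ℂ) (t : ℝ) : ℂ :=
  Complex.exp ((Real.pi * u * t ^ 2 : ℝ) * Complex.I) * f t

theorem stftGauss2_tensor (f g : ℝ → ℂ) (x₁ x₂ ξ₁ ξ₂ : ℝ) :
    stftGauss2 (fun q => f q.1 * g q.2) x₁ x₂ ξ₁ ξ₂ = stftGauss f x₁ ξ₁ * stftGauss g x₂ ξ₂ := by
  rw [stftGauss, stftGauss, ← integral_prod_mul, ← Measure.volume_eq_prod, stftGauss2]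
  refine integral_congr_ae (ae_of_all _ fun q => ?_)
  have hexp : cexp (-(2 * Real.pi * (q.1 * ξ₁ + q.2 * ξ₂) : ℝ) * I)
      = cexp (-(2 * Real.pi * q.1 * ξ₁ : ℝ) * I) * cexp (-(2 * Real.pi * q.2 * ξ₂ : ℝ) * I) := by
    rw [← exp_add]; congr 1; push_cast; ring
  beta_reduce
  rw [hexp, map_mul]
  ring

theorem stftGauss_modulation (f : ℝ → ℂ) (u x ξ : ℝ) :
    stftGauss (modulation u f) x ξ = stftGauss f x (ξ - u) := by
  refine integral_congr_ae (ae_of_all _ fun t => ?_)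
  have hexp : cexp ((2 * Real.pi * u * t : ℝ) * I) * cexp (-(2 * Real.pi * t * ξ : ℝ) * I)
      = cexp (-(2 * Real.pi * t * (ξ - u) : ℝ) * I) := by
    rw [← exp_add]; congr 1; push_cast; ring
  dsimp only [modulation]
  rw [← hexp]
  ring

theorem g53rep_tensor (f g : ℝ → ℂ) (u : ℝ) :
    g53rep (0, 0, 0, u, 0) (fun q => f q.1 * g q.2)
      = fun q => modulation u f q.1 * chirp u g q.2 := by
  ext q
  have hexp : cexp ((2 * Real.pi * (0 - 0 * u + u * q.1 - 0 * q.2 + 1 / 2 * u * q.2 ^ 2) : ℝ) * I)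
      = cexp ((2 * Real.pi * u * q.1 : ℝ) * I) * cexp ((Real.pi * u * q.2 ^ 2 : ℝ) * I) := by
    rw [← exp_add]; congr 1; push_cast; ring
  rw [g53rep, modulation, chirp, hexp, sub_zero, sub_zero]
  ring

theorem stftGauss_chirp_gauss1 (u x ξ : ℝ) :
    stftGauss (chirp u gauss1) x ξ
      = ∫ t : ℝ, cexp (Real.pi * (u * I - 2) * t ^ 2
          + (2 * Real.pi * x - 2 * Real.pi * ξ * I) * t + -(Real.pi * x ^ 2)) := by
  refine integral_congr_ae (ae_of_all _ fun t => ?_)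
  simp only [chirp, gauss1, ← exp_conj, conj_ofReal, ← exp_add]
  congr 1
  push_cast
  ring

theorem norm_stftGauss_chirp_gauss1 (u x ξ : ℝ) :
    ‖stftGauss (chirp u gauss1) x ξ‖ = (4 + u ^ 2) ^ (-(1 / 4) : ℝ)
      * Real.exp (-(Real.pi * x ^ 2) / 2 - 2 * Real.pi * (ξ - u * x / 2) ^ 2 / (4 + u ^ 2)) := by
  have hb : (Real.pi * (u * I - 2)).re < 0 := by simp [Real.pi_pos]
  have hs : (0 : ℝ) < 4 + u ^ 2 := by positivity
  have hsC : (4 + u ^ 2 : ℂ) ≠ 0 := by exact_mod_cast hs.ne'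
  have hbC : (u * I - 2 : ℂ) ≠ 0 := fun h => by simpa using congrArg re h
  rw [stftGauss_chirp_gauss1, norm_integral_cexp_quadratic hb]
  congr 1
  · have hnorm : ‖(Real.pi : ℂ) * (u * I - 2)‖ = Real.pi * (4 + u ^ 2) ^ (1 / 2 : ℝ) := by
      rw [norm_mul, norm_real, Real.norm_of_nonneg Real.pi_pos.le, ← Real.sqrt_eq_rpow,
        Complex.norm_def, normSq_apply]
      congr 2
      simp
      ring
    rw [hnorm, div_mul_cancel_left₀ Real.pi_pos.ne', ← Real.rpow_neg_one,
      ← Real.rpow_mul hs.le, ← Real.rpow_mul hs.le]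
    norm_num
  · congr 1
    have hπ : (Real.pi : ℂ) ≠ 0 := ofReal_ne_zero.mpr Real.pi_ne_zero
    -- only the real part is needed; the imaginary part makes the identity checkable by `field_simp`
    have key : -(Real.pi * x ^ 2 : ℂ) - (2 * Real.pi * x - 2 * Real.pi * ξ * I) ^ 2
        / (4 * (Real.pi * (u * I - 2)))
        = ((-(Real.pi * x ^ 2) / 2 - 2 * Real.pi * (ξ - u * x / 2) ^ 2 / (4 + u ^ 2) : ℝ) : ℂ)
          + ((Real.pi * (u * (x ^ 2 - ξ ^ 2) - 4 * x * ξ) / (4 + u ^ 2) : ℝ) : ℂ) * I := by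
      rw [sub_eq_iff_eq_add, ← sub_eq_iff_eq_add', eq_div_iff (by simp [hπ, hbC])]
      push_cast
      field_simp
      ring_nf
      simp only [I_sq]
      ring
    rw [key, add_re, ofReal_re, mul_I_re, ofReal_im, neg_zero, add_zero]

end

theorem integral_rpow_norm_stftGauss_chirp_gauss1 {p : ℝ} (hp : 0 < p) (u : ℝ) :
    ∫ z : ℝ × ℝ, ‖stftGauss (chirp u gauss1) z.1 z.2‖ ^ p
      = (4 + u ^ 2) ^ (1 / 2 - p / 4 : ℝ) / p := by
  have hs : (0 : ℝ) < 4 + u ^ 2 := by positivity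
  set a := p * Real.pi / 2
  set b := 2 * p * Real.pi / (4 + u ^ 2)
  have hpt : ∀ z : ℝ × ℝ, ‖stftGauss (chirp u gauss1) z.1 z.2‖ ^ p
      = (4 + u ^ 2) ^ (-(p / 4)) *
        (Real.exp (-a * z.1 ^ 2) * Real.exp (-b * (z.2 - u / 2 * z.1) ^ 2)) := by
    intro z
    rw [norm_stftGauss_chirp_gauss1, Real.mul_rpow (by positivity) (Real.exp_nonneg _),
      ← Real.exp_mul, ← Real.rpow_mul hs.le, ← Real.exp_add]
    congr 2
    · ring
    · simp only [a, b]
      field_simp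
      ring
  have hshear := integral_prod_comp_skew_sub (volume : Measure ℝ) volume
    (h := fun x => u / 2 * x) (by fun_prop)
    (fun w => Real.exp (-a * w.1 ^ 2) * Real.exp (-b * w.2 ^ 2))
  simp only at hshear
  rw [integral_congr_ae (ae_of_all _ hpt), integral_const_mul, Measure.volume_eq_prod, hshear,
    integral_prod_mul (fun x => Real.exp (-a * x ^ 2)) (fun y => Real.exp (-b * y ^ 2)),
    integral_gaussian, integral_gaussian, ← Real.sqrt_mul (by positivity),
    show Real.pi / a * (Real.pi / b) = (4 + u ^ 2) / p ^ 2 by simp only [a, b]; field_simp,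
    Real.sqrt_div hs.le, Real.sqrt_sq hp.le, Real.sqrt_eq_rpow, ← mul_div_assoc,
    ← Real.rpow_add hs]
  ring_nf

theorem integral_rpow_norm_stftGauss2_g53rep (f : ℝ → ℂ) {p : ℝ} (hp : 0 < p) (u : ℝ) :
    ∫ w : (ℝ × ℝ) × ℝ × ℝ,
        ‖stftGauss2 (g53rep (0, 0, 0, u, 0) (fun q => f q.1 * gauss1 q.2))
          w.1.1 w.1.2 w.2.1 w.2.2‖ ^ p
      = (4 + u ^ 2) ^ (1 / 2 - p / 4 : ℝ) / p * ∫ z : ℝ × ℝ, ‖stftGauss f z.1 z.2‖ ^ p := by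
  have hpt : ∀ w : (ℝ × ℝ) × ℝ × ℝ,
      ‖stftGauss2 (g53rep (0, 0, 0, u, 0) (fun q => f q.1 * gauss1 q.2))
          w.1.1 w.1.2 w.2.1 w.2.2‖ ^ p
        = (fun z : ℝ × ℝ => ‖stftGauss f z.1 (z.2 - u)‖ ^ p) (w.1.1, w.2.1)
          * (fun z : ℝ × ℝ => ‖stftGauss (chirp u gauss1) z.1 z.2‖ ^ p) (w.1.2, w.2.2) := by
    intro w
    rw [g53rep_tensor, stftGauss2_tensor, stftGauss_modulation, norm_mul,
      Real.mul_rpow (norm_nonneg _) (norm_nonneg _)]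
  have htransl := integral_prod_comp_skew_sub (volume : Measure ℝ) volume
    (h := fun _ => u) measurable_const (fun z => ‖stftGauss f z.1 z.2‖ ^ p)
  rw [integral_congr_ae (ae_of_all _ hpt), Measure.volume_eq_prod (ℝ × ℝ) (ℝ × ℝ),
    Measure.volume_eq_prod ℝ ℝ,
    integral_prodProdProdComm_mul _ _ _ _ (fun z => ‖stftGauss f z.1 (z.2 - u)‖ ^ p)
      (fun z => ‖stftGauss (chirp u gauss1) z.1 z.2‖ ^ p), htransl, ← Measure.volume_eq_prod,
    integral_rpow_norm_stftGauss_chirp_gauss1 hp, mul_comm]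

theorem tendsto_four_add_sq_rpow_cocompact {e : ℝ} (he : 0 < e) :
    Tendsto (fun u : ℝ => (4 + u ^ 2) ^ e) (cocompact ℝ) atTop := by
  have hsq : Tendsto (fun u : ℝ => u ^ 2) (cocompact ℝ) atTop := by
    simpa only [Function.comp_def, Real.norm_eq_abs, sq_abs] using
      (tendsto_pow_atTop two_ne_zero).comp (tendsto_norm_cocompact_atTop (E := ℝ))
  exact (tendsto_rpow_atTop he).comp (tendsto_atTop_add_const_left _ 4 hsq)

/-- For `1 ≤ p < 2` the orbit `{π(0,0,0,u,0)(f₁⊗φ) : u ∈ ℝ}` is unbounded in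
`M^p(ℝ²)`: `‖π(0,0,0,u,0)(f₁⊗φ)‖_{M^p} = c_p (4+u²)^{1/(2p)-1/4} ‖f₁‖_{M^p}`,
which tends to infinity as `|u| → ∞`. -/
theorem g53_orbit_unbounded_in_Mp (p : ℝ) (hp : 1 ≤ p) (hp2 : p < 2) :
    ∃ c > 0, ∀ f₁ : ℝ → ℂ,
      Integrable (fun z : ℝ × ℝ => ‖stftGauss f₁ z.1 z.2‖ ^ p) →
      (∀ u : ℝ,
        (∫ w : (ℝ × ℝ) × ℝ × ℝ,
            ‖stftGauss2 (g53rep (0, 0, 0, u, 0) (fun q => f₁ q.1 * gauss1 q.2))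
              w.1.1 w.1.2 w.2.1 w.2.2‖ ^ p) ^ (1 / p)
          = c * (4 + u ^ 2) ^ (1 / (2 * p) - 1 / 4) *
            (∫ z : ℝ × ℝ, ‖stftGauss f₁ z.1 z.2‖ ^ p) ^ (1 / p)) ∧
      (0 < (∫ z : ℝ × ℝ, ‖stftGauss f₁ z.1 z.2‖ ^ p) ^ (1 / p) →
        Tendsto (fun u : ℝ =>
          (∫ w : (ℝ × ℝ) × ℝ × ℝ,
            ‖stftGauss2 (g53rep (0, 0, 0, u, 0) (fun q => f₁ q.1 * gauss1 q.2))
              w.1.1 w.1.2 w.2.1 w.2.2‖ ^ p) ^ (1 / p)) (cocompact ℝ) atTop) := by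
  have hp0 : 0 < p := by linarith
  have hexp : 0 < 1 / (2 * p) - 1 / 4 :=
    sub_pos.mpr (one_div_lt_one_div_of_lt (by positivity) (by linarith))
  refine ⟨p⁻¹ ^ (1 / p), by positivity, fun f₁ _ => ?_⟩
  have hJ : 0 ≤ ∫ z : ℝ × ℝ, ‖stftGauss f₁ z.1 z.2‖ ^ p :=
    integral_nonneg fun z => by positivity
  have hnorm : ∀ u : ℝ,
      (∫ w : (ℝ × ℝ) × ℝ × ℝ,
          ‖stftGauss2 (g53rep (0, 0, 0, u, 0) (fun q => f₁ q.1 * gauss1 q.2))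
            w.1.1 w.1.2 w.2.1 w.2.2‖ ^ p) ^ (1 / p)
        = p⁻¹ ^ (1 / p) * (4 + u ^ 2) ^ (1 / (2 * p) - 1 / 4) *
          (∫ z : ℝ × ℝ, ‖stftGauss f₁ z.1 z.2‖ ^ p) ^ (1 / p) := by
    intro u
    have hs : (0 : ℝ) < 4 + u ^ 2 := by positivity
    rw [integral_rpow_norm_stftGauss2_g53rep f₁ hp0, div_eq_mul_inv,
      Real.mul_rpow (by positivity) hJ, Real.mul_rpow (by positivity) (by positivity),
      ← Real.rpow_mul hs.le, show (1 / 2 - p / 4) * (1 / p) = 1 / (2 * p) - 1 / 4 by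
        field_simp]
    ring
  refine ⟨hnorm, fun hpos => ?_⟩
  exact (((tendsto_four_add_sq_rpow_cocompact hexp).const_mul_atTop
    (by positivity)).atTop_mul_const hpos).congr fun u => (hnorm u).symm
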